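/- Fix i ∈ {0, 1, ..., r} and assume the slope f'_i = −1 + 2·Σ_{j ≤ i} a_j is nonzero. Then the function z ↦ f(z)²/f'_i − 2·A·z − Σ_{j=1}^r a_j·(z − z_j)·|z − z_j| is constant on the open interval (z_i, z_{i+1}) (with the conventions z_0 = −∞ and z_{r+1} = +∞). -/
import Mathlib


open Finset

/-- The piecewise affine function `f(z) = A + ∑ a_i |z − z_i|`. -/
noncomputable def fpa {r : ℕ} (A : ℝ) (a zs : Fin r → ℝ) (x : ℝ) : ℝ :=
  A + ∑ i, a i * |x - zs i|

/-- The fSlope `f'_i = −1 + 2 ∑_{j ≤ i} a_j` of `f` on the interval `(z_i, z_{i+1})`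
(1-indexed turning points, so the sum is over the first `i` coefficients). -/
def fSlope {r : ℕ} (a : Fin r → ℝ) (i : ℕ) : ℝ :=
  -1 + 2 * ∑ j ∈ Finset.univ.filter (fun j : Fin r => (j : ℕ) < i), a j

/-- `x` belongs to the open interval `(z_i, z_{i+1})`, with the conventions
`z_0 = −∞`, `z_{r+1} = +∞` (intervals indexed by `i = 0, …, r`). -/
def inInterval {r : ℕ} (zs : Fin r → ℝ) (i : ℕ) (x : ℝ) : Prop :=
  (∀ j : Fin r, (j : ℕ) < i → zs j < x) ∧ (∀ j : Fin r, i ≤ (j : ℕ) → x < zs j)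

theorem statement9 {r : ℕ} (hr : 1 ≤ r) (A : ℝ) (hA : 0 < A)
    (zs a : Fin r → ℝ)
    (hz : ∀ i j : Fin r, i < j → zs i < zs j)
    (ha : ∀ i, 0 < a i) (hsum : ∑ i, a i = 1)
    (i : ℕ) (hi : i ≤ r) (hslope : fSlope a i ≠ 0) :
    ∀ x y : ℝ, inInterval zs i x → inInterval zs i y →
      fpa A a zs x ^ 2 / fSlope a i - 2 * A * x -
          (∑ j, a j * (x - zs j) * |x - zs j|) =
        fpa A a zs y ^ 2 / fSlope a i - 2 * A * y -
          (∑ j, a j * (y - zs j) * |y - zs j|) := by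
  classical
  set P := Finset.univ.filter (fun j : Fin r => (j : ℕ) < i) with hP
  set Q := Finset.univ.filter (fun j : Fin r => ¬ (j : ℕ) < i) with hQ
  set p := ∑ j ∈ P, a j with hp
  set q := ∑ j ∈ Q, a j with hq
  set ZP := ∑ j ∈ P, a j * zs j with hZP
  set ZQ := ∑ j ∈ Q, a j * zs j with hZQ
  set WP := ∑ j ∈ P, a j * zs j ^ 2 with hWP
  set WQ := ∑ j ∈ Q, a j * zs j ^ 2 with hWQ
  have hpq : p + q = 1 := by
    rw [hp, hq, hP, hQ, Finset.sum_filter_add_sum_filter_not, hsum]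
  have hs : fSlope a i = -1 + 2 * p := rfl
  have key1 : ∀ x : ℝ, inInterval zs i x →
      fpa A a zs x = fSlope a i * x + (A - ZP + ZQ) := by
    intro x hx
    have : (∑ j, a j * |x - zs j|)
        = (∑ j ∈ P, a j * |x - zs j|) + ∑ j ∈ Q, a j * |x - zs j| := by
      rw [hP, hQ, Finset.sum_filter_add_sum_filter_not]
    rw [fpa, this]
    have e1 : (∑ j ∈ P, a j * |x - zs j|) = p * x - ZP := by
      rw [hp, hZP, Finset.sum_mul, ← Finset.sum_sub_distrib]
      refine Finset.sum_congr rfl fun j hj => ?_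
      have hj' : (j : ℕ) < i := (Finset.mem_filter.mp hj).2
      rw [abs_of_nonneg (by linarith [hx.1 j hj'])]
      ring
    have e2 : (∑ j ∈ Q, a j * |x - zs j|) = ZQ - q * x := by
      rw [hq, hZQ, Finset.sum_mul, ← Finset.sum_sub_distrib]
      refine Finset.sum_congr rfl fun j hj => ?_
      have hj' : i ≤ (j : ℕ) := Nat.le_of_not_lt (Finset.mem_filter.mp hj).2
      rw [abs_of_nonpos (by linarith [hx.2 j hj'])]
      ring
    rw [e1, e2, hs]
    linear_combination (-x) * hpq
  have key2 : ∀ x : ℝ, inInterval zs i x →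
      (∑ j, a j * (x - zs j) * |x - zs j|)
        = fSlope a i * x ^ 2 - 2 * (ZP - ZQ) * x + (WP - WQ) := by
    intro x hx
    have : (∑ j, a j * (x - zs j) * |x - zs j|)
        = (∑ j ∈ P, a j * (x - zs j) * |x - zs j|)
          + ∑ j ∈ Q, a j * (x - zs j) * |x - zs j| := by
      rw [hP, hQ, Finset.sum_filter_add_sum_filter_not]
    rw [this]
    have e1 : (∑ j ∈ P, a j * (x - zs j) * |x - zs j|)
        = p * x ^ 2 - 2 * ZP * x + WP := by
      have : (∑ j ∈ P, a j * (x - zs j) * |x - zs j|)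
          = ∑ j ∈ P, (a j * x ^ 2 - 2 * (a j * zs j) * x + a j * zs j ^ 2) := by
        refine Finset.sum_congr rfl fun j hj => ?_
        have hj' : (j : ℕ) < i := (Finset.mem_filter.mp hj).2
        rw [abs_of_nonneg (by linarith [hx.1 j hj'])]
        ring
      rw [this]
      simp [Finset.sum_add_distrib, Finset.sum_sub_distrib, ← Finset.sum_mul,
        ← Finset.mul_sum, hp, hZP, hWP]
    have e2 : (∑ j ∈ Q, a j * (x - zs j) * |x - zs j|)
        = -(q * x ^ 2 - 2 * ZQ * x + WQ) := by
      have : (∑ j ∈ Q, a j * (x - zs j) * |x - zs j|)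
          = ∑ j ∈ Q, -(a j * x ^ 2 - 2 * (a j * zs j) * x + a j * zs j ^ 2) := by
        refine Finset.sum_congr rfl fun j hj => ?_
        have hj' : i ≤ (j : ℕ) := Nat.le_of_not_lt (Finset.mem_filter.mp hj).2
        rw [abs_of_nonpos (by linarith [hx.2 j hj'])]
        ring
      rw [this]
      simp [Finset.sum_add_distrib, Finset.sum_sub_distrib, ← Finset.sum_mul,
        ← Finset.mul_sum, hq, hZQ, hWQ]
    rw [e1, e2, hs]
    linear_combination (-x ^ 2) * hpq
  intro x y hx hy
  rw [key1 x hx, key1 y hy, key2 x hx, key2 y hy]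
  field_simp
  ring
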